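/- arXiv:1207.6674 — 2 statements merged into one kernel-verified Lean document; each statement's English description precedes it below -/
import Mathlib

section
/- With the touching attractor T and notation of the standing setup, for any word i over {1,…,n} and nonnegative integers u < v, the set L_u(T_i) ∖ L_v(T_i) is a finite disjoint union of sets of the form Ψ_w(T_j^{(1)}) and Ψ_w(T_j^{(2)}), i.e., it belongs to the class 𝒯* (it admits the dust-like decomposition into T-separate pieces and level-0 touching pieces described in the paper). -/
noncomputable section

open Set Metric MeasureTheory

/-- Distance between two sets. -/
def setDist {X : Type*} [MetricSpace X] (A B : Set X) : ℝ := sInf (Set.image2 dist A B)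

/-- Lipschitz equivalence of two sets: a bi-Lipschitz bijection between them. -/
def LipEquivOn {X Y : Type*} [MetricSpace X] [MetricSpace Y] (E : Set X) (F : Set Y) : Prop :=
  ∃ (f : X → Y) (c c' : ℝ), 0 < c ∧ c ≤ c' ∧ Set.BijOn f E F ∧
    ∀ x ∈ E, ∀ y ∈ E, c * dist x y ≤ dist (f x) (f y) ∧ dist (f x) (f y) ≤ c' * dist x y

/-- The affine contraction `x ↦ ρ i * x + t i`. -/
def affMap (r t : ℕ → ℝ) (i : ℕ) (x : ℝ) : ℝ := r i * x + t i

/-- Composition of the affine maps along a word (first letter outermost). -/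
def affWord (r t : ℕ → ℝ) : List ℕ → ℝ → ℝ
  | [] => id
  | i :: w => affMap r t i ∘ affWord r t w

/-- Cylinder of a general IFS for a word over `Fin n`. -/
def cylW {X : Type*} {n : ℕ} (Ψ : Fin n → X → X) (F : Set X) (w : List (Fin n)) : Set X :=
  (w.foldr (fun i g => Ψ i ∘ g) id) '' F

/-- A (separable) contraction vector `(ρ 0, …, ρ (n-1))` in `ℝ`. -/
structure ContractionVec (n : ℕ) (ρ : ℕ → ℝ) : Prop where
  three_le : 3 ≤ n
  pos : ∀ i, i < n → 0 < ρ i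
  lt_one : ∀ i, i < n → ρ i < 1
  sum_lt : (∑ i ∈ Finset.range n, ρ i) < 1

/-- The touching IFS of the standing setup, together with its attractor `T`. -/
structure TouchingIFS (n : ℕ) (ρ : ℕ → ℝ) where
  t : ℕ → ℝ
  T : Set ℝ
  order : ∀ i, i + 1 < n → affMap ρ t i 1 ≤ affMap ρ t (i + 1) 0
  left0 : affMap ρ t 0 0 = 0
  right1 : affMap ρ t (n - 1) 1 = 1
  touch_ex : ∃ i, i + 1 < n ∧ affMap ρ t i 1 = affMap ρ t (i + 1) 0
  compactT : IsCompact T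
  nonemptyT : T.Nonempty
  invT : T = ⋃ i ∈ Finset.range n, affMap ρ t i '' T

/-- The dust-like, equally spaced IFS of the standing setup, with attractor `D`. -/
structure DustIFS (n : ℕ) (ρ : ℕ → ℝ) where
  d : ℕ → ℝ
  D : Set ℝ
  left0 : affMap ρ d 0 0 = 0
  right1 : affMap ρ d (n - 1) 1 = 1
  equal_gap : ∀ i, i + 1 < n →
    affMap ρ d (i + 1) 0 - affMap ρ d i 1 = (1 - ∑ j ∈ Finset.range n, ρ j) / (n - 1)
  compactD : IsCompact D
  nonemptyD : D.Nonempty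
  invD : D = ⋃ i ∈ Finset.range n, affMap ρ d i '' D

variable {n : ℕ} {ρ : ℕ → ℝ}

/-- Cylinder `T_w`. -/
def TouchingIFS.cyl (S : TouchingIFS n ρ) (w : List ℕ) : Set ℝ := affWord ρ S.t w '' S.T

/-- `i` is a (left) touching letter. -/
def TouchingIFS.touch (S : TouchingIFS n ρ) (i : ℕ) : Prop :=
  i + 1 < n ∧ affMap ρ S.t i 1 = affMap ρ S.t (i + 1) 0

/-- Left touching patch `L_k(T_w)` (with `α` the initial touching run length). -/
def TouchingIFS.patchL (S : TouchingIFS n ρ) (α : ℕ) (w : List ℕ) (k : ℕ) : Set ℝ :=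
  ⋃ j ∈ Finset.range α, S.cyl (w ++ List.replicate k 0 ++ [j])

/-- Right touching patch `R_k(T_w)` (with `β` the final touching run length). -/
def TouchingIFS.patchR (S : TouchingIFS n ρ) (β : ℕ) (w : List ℕ) (k : ℕ) : Set ℝ :=
  ⋃ j ∈ Finset.Ico (n - β) n, S.cyl (w ++ List.replicate k (n - 1) ++ [j])

/-- `α` is the number of successive touching intervals at the beginning. -/
def TouchingIFS.alphaRun (S : TouchingIFS n ρ) (α : ℕ) : Prop :=
  1 ≤ α ∧ α < n ∧ (∀ i, i + 1 < α → S.touch i) ∧ ¬ S.touch (α - 1)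

/-- `β` is the number of successive touching intervals at the end. -/
def TouchingIFS.betaRun (S : TouchingIFS n ρ) (β : ℕ) : Prop :=
  1 ≤ β ∧ β < n ∧ (∀ i, n - β ≤ i → i + 1 < n → S.touch i) ∧ ¬ S.touch (n - β - 1)

/-- Cylinder `D_w`. -/
def DustIFS.cyl (Q : DustIFS n ρ) (w : List ℕ) : Set ℝ := affWord ρ Q.d w '' Q.D

/-- Left patch `L_k(D_w)`. -/
def DustIFS.patchL (Q : DustIFS n ρ) (α : ℕ) (w : List ℕ) (k : ℕ) : Set ℝ :=
  ⋃ j ∈ Finset.range α, Q.cyl (w ++ List.replicate k 0 ++ [j])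

/-- Right patch `R_k(D_w)`. -/
def DustIFS.patchR (Q : DustIFS n ρ) (β : ℕ) (w : List ℕ) (k : ℕ) : Set ℝ :=
  ⋃ j ∈ Finset.Ico (n - β) n, Q.cyl (w ++ List.replicate k (n - 1) ++ [j])

/-- `τ k` is the unique positive integer with `ρₙᵏ ρ₁ < ρ₁ ^ τ(k) ≤ ρₙᵏ`. -/
def tauSpec (ρ : ℕ → ℝ) (n : ℕ) (τ : ℕ → ℕ) : Prop :=
  ∀ k, 1 ≤ k → 1 ≤ τ k ∧ ρ (n - 1) ^ k * ρ 0 < ρ 0 ^ τ k ∧ ρ 0 ^ τ k ≤ ρ (n - 1) ^ k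

/-- `Cᵏ = R_k(T_{i₀}) ∪ L_{τ(k)}(T_{i₀+1})`. -/
def Cset (S : TouchingIFS n ρ) (α β i₀ : ℕ) (τ : ℕ → ℕ) (k : ℕ) : Set ℝ :=
  S.patchR β [i₀] k ∪ S.patchL α [i₀ + 1] (τ k)

/-- The touching letter `i` is left substitutable. -/
def TouchingIFS.LeftSub (S : TouchingIFS n ρ) (α : ℕ) (i : ℕ) : Prop :=
  ∃ (w : List ℕ) (a : ℕ) (k k' : ℕ), (∀ b ∈ w ++ [a], b < n) ∧
    Metric.diam (S.patchL α [i + 1] k) = Metric.diam (S.patchL α (i :: (w ++ [a])) k') ∧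
    a ≠ 0 ∧ ∀ ℓ, S.touch ℓ → a ≠ ℓ + 1

/-- The touching letter `i` is right substitutable. -/
def TouchingIFS.RightSub (S : TouchingIFS n ρ) (β : ℕ) (i : ℕ) : Prop :=
  ∃ (w : List ℕ) (a : ℕ) (k k' : ℕ), (∀ b ∈ w ++ [a], b < n) ∧
    Metric.diam (S.patchR β [i] k) = Metric.diam (S.patchR β ((i + 1) :: (w ++ [a])) k') ∧
    a ≠ n - 1 ∧ ¬ S.touch a

/-- Convex hull of a bounded set of reals: the minimal closed interval containing it. -/
def CH (B : Set ℝ) : Set ℝ := Set.Icc (sInf B) (sSup B)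

/-- `[a,b]` is a maximal run of touching letters (a first-level connected component). -/
def TouchingIFS.run (S : TouchingIFS n ρ) (a b : ℕ) : Prop :=
  a ≤ b ∧ b < n ∧ (∀ i, a ≤ i → i < b → S.touch i) ∧
  (a = 0 ∨ ¬ S.touch (a - 1)) ∧ (b = n - 1 ∨ ¬ S.touch b)

/-- Membership in the class `𝒯⁽¹⁾`: a `T`-separate copy `Ψ_w(T⁽¹⁾_j)`. -/
def TouchingIFS.T1mem (S : TouchingIFS n ρ) (X : Set ℝ) : Prop :=
  ∃ (w : List ℕ) (a b : ℕ), (∀ c ∈ w, c < n) ∧ S.run a b ∧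
    X = affWord ρ S.t w '' (⋃ j ∈ Finset.Icc a b, S.cyl [j]) ∧
    0 < setDist X (S.T \ X)

/-- Membership in the class `𝒯⁽²⁾`: a copy `Ψ_w(T⁽²⁾_i) = Ψ_w(R₀(T_i) ∪ L₀(T_{i+1}))`. -/
def TouchingIFS.T2mem (S : TouchingIFS n ρ) (α β : ℕ) (X : Set ℝ) : Prop :=
  ∃ (w : List ℕ) (i : ℕ), (∀ c ∈ w, c < n) ∧ S.touch i ∧
    X = affWord ρ S.t w '' (S.patchR β [i] 0 ∪ S.patchL α [i + 1] 0)

/-- An admissible family for the simple decomposition of `E` by the `A i`. -/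
def GoodFam (E : Set ℝ) {k : ℕ} (A : Fin k → Set ℝ) (𝒮 : Finset (Set ℝ)) : Prop :=
  (∀ B ∈ 𝒮, IsCompact B ∧ B ⊆ E) ∧ (⋃ B ∈ 𝒮, B) = E ∧
  (∀ B ∈ 𝒮, ∀ B' ∈ 𝒮, B ≠ B' → CH B ∩ CH B' = ∅) ∧ (∀ i, A i ∈ 𝒮)

/-!
With `b = Ψ_{α-1}(1)` we have `L_k(T_w) = T ∩ [Ψ_w(0), Ψ_{w0ᵏ}(b)]`, so `L_u(T_w) ∖ L_v(T_w)` is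
`T ∩ (Ψ_{w0ᵛ}(b), Ψ_{w0ᵘ}(b)]`: the union of the images under `Ψ_{w0ᵏ}`, `u ≤ k < v`, of the
base set `T ∩ (Ψ_0(b), b] = L_0(T) ∖ L_1(T)`.

The base set is cut by `T`-free gaps into second-level pieces: inside `T_j`, `j < α`, the images
under `Ψ_j` of the first-level components made of the letters `α, …, n-β-1` (of `α, …, n-1` when
`j = α-1`), and across each touching point `Ψ_j(1) = Ψ_{j+1}(0)` the set
`R_0(T_j) ∪ L_0(T_{j+1}) = T⁽²⁾_j`. There are at least two pieces unless `α = 1` and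
`T_1 ∪ ⋯ ∪ T_{n-1}` is a single component; then that one piece is split once more in the same way.

Since `T ∩ Ψ_w([0,1]) = Ψ_w(T)`, each `Ψ_w` carries pieces to pieces and `T`-free gaps to `T`-free
gaps, and a piece with gaps on both sides is `T`-separate.
-/

/-- `T ∩ (A, B]` splits into the pieces `T ∩ [P, Q]`, `(P, Q) ∈ l`, listed from left to right and
separated by open gaps free of `T`. -/
inductive GapChain (T : Set ℝ) : ℝ → List (ℝ × ℝ) → ℝ → Prop
  | nil (A : ℝ) : GapChain T A [] A
  | cons {A B : ℝ} {I : ℝ × ℝ} {l : List (ℝ × ℝ)} (hAI : A < I.1) (hI : I.1 ≤ I.2)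
      (hIT : I.1 ∈ T) (hgap : T ∩ Ioo A I.1 = ∅) :
      GapChain T I.2 l B → GapChain T A (I :: l) B

namespace GapChain

variable {T : Set ℝ} {A B : ℝ} {l : List (ℝ × ℝ)}

theorem le (h : GapChain T A l B) : A ≤ B := by
  induction h with
  | nil => exact le_rfl
  | cons hAI hI _ _ _ ih => linarith

theorem ne_nil (h : GapChain T A l B) (hAB : A < B) : l ≠ [] := by
  rintro rfl
  cases h
  exact lt_irrefl _ hAB

theorem append {M : ℝ} {l' : List (ℝ × ℝ)} (h : GapChain T A l M) (h' : GapChain T M l' B) :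
    GapChain T A (l ++ l') B := by
  induction h with
  | nil => exact h'
  | cons hAI hI hIT hgap _ ih => exact cons hAI hI hIT hgap (ih h')

theorem bounds_of_mem (h : GapChain T A l B) : ∀ I ∈ l, A < I.1 ∧ I.1 ≤ I.2 ∧ I.2 ≤ B := by
  induction h with
  | nil => simp
  | cons hAI hI _ _ htail ih =>
    intro J hJ
    rcases List.mem_cons.mp hJ with rfl | hJ
    · exact ⟨hAI, hI, htail.le⟩
    · obtain ⟨h1, h2, h3⟩ := ih J hJ
      exact ⟨by linarith, h2, h3⟩

theorem fst_mem (h : GapChain T A l B) : ∀ I ∈ l, I.1 ∈ T := by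
  induction h with
  | nil => simp
  | cons _ _ hIT _ _ ih =>
    intro J hJ
    rcases List.mem_cons.mp hJ with rfl | hJ
    exacts [hIT, ih J hJ]

theorem pairwise_lt (h : GapChain T A l B) : l.Pairwise fun I J => I.2 < J.1 := by
  induction h with
  | nil => exact List.Pairwise.nil
  | cons _ _ _ _ htail ih => exact ih.cons fun J hJ => (htail.bounds_of_mem J hJ).1

theorem inter_Ioc_eq (h : GapChain T A l B) : T ∩ Ioc A B = ⋃ I ∈ l, T ∩ Icc I.1 I.2 := by
  induction h with
  | nil => simp
  | @cons A B I l hAI hI _ hgap htail ih =>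
    simp only [List.mem_cons, iUnion_iUnion_eq_or_left]
    rw [← ih, ← inter_union_distrib_left]
    ext z
    simp only [mem_inter_iff, mem_union, mem_Ioc, mem_Icc, and_congr_right_iff]
    intro hz
    have hB := htail.le
    have hnot : ¬ (A < z ∧ z < I.1) := fun h' => (hgap.subset ⟨hz, h'⟩ : z ∈ (∅ : Set ℝ))
    constructor
    · rintro ⟨hAz, hzB⟩
      by_cases hzI : z ≤ I.2
      · exact Or.inl ⟨not_lt.mp fun h' => hnot ⟨hAz, h'⟩, hzI⟩
      · exact Or.inr ⟨not_le.mp hzI, hzB⟩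
    · rintro (⟨h1, h2⟩ | ⟨h1, h2⟩) <;> constructor <;> linarith

theorem exists_gaps (h : GapChain T A l B) {B' : ℝ} (hB : B < B') (hgap : T ∩ Ioo B B' = ∅) :
    ∀ I ∈ l, (∃ x < I.1, T ∩ Ioo x I.1 = ∅) ∧ ∃ y > I.2, T ∩ Ioo I.2 y = ∅ := by
  induction h with
  | nil => simp
  | @cons A B I l hAI hI _ hgapI htail ih =>
    intro J hJ
    rcases List.mem_cons.mp hJ with rfl | hJ
    · refine ⟨⟨A, hAI, hgapI⟩, ?_⟩
      cases htail with
      | nil => exact ⟨B', hB, hgap⟩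
      | cons hAJ _ _ hgapJ _ => exact ⟨_, hAJ, hgapJ⟩
    · exact ih hB hgap J hJ

end GapChain

theorem setDist_inter_Icc_pos {T : Set ℝ} {P Q x y : ℝ} (hP : P ∈ T) (hPQ : P ≤ Q)
    (hx : x < P) (hgx : T ∩ Ioo x P = ∅) (hy : Q < y) (hgy : T ∩ Ioo Q y = ∅)
    (hne : (T \ Icc P Q).Nonempty) :
    0 < setDist (T ∩ Icc P Q) (T \ (T ∩ Icc P Q)) := by
  rw [sdiff_self_inter]
  have hbound : ∀ d ∈ image2 dist (T ∩ Icc P Q) (T \ Icc P Q), min (P - x) (y - Q) ≤ d := by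
    rintro _ ⟨p, ⟨-, hp⟩, q, ⟨hqT, hq⟩, rfl⟩
    have hq' : q ≤ x ∨ y ≤ q := by
      by_contra! h
      rcases lt_or_ge q P with hqP | hPq
      · exact hgx.subset ⟨hqT, h.1, hqP⟩
      rcases le_or_gt q Q with hqQ | hQq
      · exact hq ⟨hPq, hqQ⟩
      · exact hgy.subset ⟨hqT, hQq, h.2⟩
    rw [Real.dist_eq]
    rcases hq' with h | h
    · linarith [min_le_left (P - x) (y - Q), le_abs_self (p - q), hp.1]
    · linarith [min_le_right (P - x) (y - Q), neg_abs_le (p - q), hp.2]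
  obtain ⟨z, hz⟩ := hne
  exact (lt_min (sub_pos.2 hx) (sub_pos.2 hy)).trans_le
    (le_csInf ⟨_, mem_image2_of_mem ⟨hP, le_rfl, hPQ⟩ hz⟩ hbound)

theorem GapChain.setDist_pos {T : Set ℝ} {A B B' : ℝ} {l : List (ℝ × ℝ)}
    (h : GapChain T A l B) (hA : A ∈ T) (hB : B < B') (hgap : T ∩ Ioo B B' = ∅) :
    ∀ I ∈ l, 0 < setDist (T ∩ Icc I.1 I.2) (T \ (T ∩ Icc I.1 I.2)) := by
  intro I hI
  obtain ⟨⟨x, hx, hgx⟩, y, hy, hgy⟩ := h.exists_gaps hB hgap I hI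
  obtain ⟨hAI, hI12, -⟩ := h.bounds_of_mem I hI
  exact setDist_inter_Icc_pos (h.fst_mem I hI) hI12 hx hgx hy hgy
    ⟨A, hA, fun h' => absurd h'.1 (not_le.mpr hAI)⟩

theorem forall_lt_append_replicate_zero {w : List ℕ} (hw : ∀ c ∈ w, c < n) (hn : 0 < n) (k : ℕ) :
    ∀ c ∈ w ++ List.replicate k 0, c < n := by
  simp only [List.mem_append, List.mem_replicate]
  rintro c (hc | ⟨-, rfl⟩)
  exacts [hw c hc, hn]

namespace TouchingIFS

variable (S : TouchingIFS n ρ)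

abbrev f (i : ℕ) : ℝ → ℝ := affMap ρ S.t i

abbrev Ψ (w : List ℕ) : ℝ → ℝ := affWord ρ S.t w

theorem Ψ_append (w₁ w₂ : List ℕ) : S.Ψ (w₁ ++ w₂) = S.Ψ w₁ ∘ S.Ψ w₂ := by
  induction w₁ with
  | nil => rfl
  | cons i w ih => simp only [List.cons_append, Ψ, affWord, ih, Function.comp_assoc]

theorem cyl_append (w v : List ℕ) : S.cyl (w ++ v) = S.Ψ w '' S.cyl v := by
  simp only [cyl, ← image_comp, ← Ψ_append]

theorem cyl_singleton (j : ℕ) : S.cyl [j] = S.f j '' S.T := rfl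

theorem f_zero_zero : S.f 0 0 = 0 := S.left0

theorem f_last_one : S.f (n - 1) 1 = 1 := S.right1

theorem touch.f_one_eq {i : ℕ} (h : S.touch i) : S.f i 1 = S.f (i + 1) 0 := h.2

theorem f_mem_T {i : ℕ} (hi : i < n) {x : ℝ} (hx : x ∈ S.T) : S.f i x ∈ S.T := by
  rw [S.invT]
  exact mem_biUnion (Finset.mem_range.2 hi) (mem_image_of_mem _ hx)

theorem exists_f_eq {z : ℝ} (hz : z ∈ S.T) : ∃ i < n, ∃ s ∈ S.T, S.f i s = z := by
  rw [S.invT] at hz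
  simpa only [mem_iUnion, Finset.mem_range, mem_image, exists_prop] using hz

theorem Ψ_mem_T {w : List ℕ} (hw : ∀ c ∈ w, c < n) {x : ℝ} (hx : x ∈ S.T) : S.Ψ w x ∈ S.T := by
  induction w with
  | nil => exact hx
  | cons i w ih =>
    exact S.f_mem_T (hw i List.mem_cons_self) (ih fun c hc => hw c (List.mem_cons_of_mem i hc))

theorem f_one_lt_f_zero {i j : ℕ} (hij : i + 1 = j) (hj : j < n) (h : ¬ S.touch i) :
    S.f i 1 < S.f j 0 := by
  subst hij
  exact (S.order i hj).lt_of_ne fun h' => h ⟨hj, h'⟩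

theorem biUnion_cyl_append (w : List ℕ) (s : Finset ℕ) :
    ⋃ j ∈ s, S.cyl (w ++ [j]) = S.Ψ w '' ⋃ j ∈ s, S.cyl [j] := by
  simp only [cyl_append, image_iUnion₂]

theorem Ψ_replicate_zero (k : ℕ) : S.Ψ (List.replicate k 0) 0 = 0 := by
  induction k with
  | zero => rfl
  | succ k ih =>
    change S.f 0 (S.Ψ (List.replicate k 0) 0) = 0
    rw [ih, f_zero_zero]

variable {S} in
theorem alphaRun.le_sub {α β : ℕ} (hα : S.alphaRun α) (hβ : S.betaRun β) : α ≤ n - β := by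
  by_contra! h
  exact hβ.2.2.2 (hα.2.2.1 (n - β - 1) (by have := hβ.2.1; omega))

/-- `I` is the pair of endpoints of a set `Ψ_w(T⁽¹⁾_j)` or `Ψ_w(T⁽²⁾_i)`. -/
def IsPiece (α β : ℕ) (I : ℝ × ℝ) : Prop :=
  ∃ w : List ℕ, (∀ c ∈ w, c < n) ∧
    ((∃ a b, S.run a b ∧ I = (S.Ψ w (S.f a 0), S.Ψ w (S.f b 1))) ∨
      ∃ i, S.touch i ∧
        I = (S.Ψ w (S.f i (S.f (n - β) 0)), S.Ψ w (S.f (i + 1) (S.f (α - 1) 1))))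

variable {S} in
theorem IsPiece.map {α β : ℕ} {I : ℝ × ℝ} (hI : S.IsPiece α β I) {p : List ℕ}
    (hp : ∀ c ∈ p, c < n) : S.IsPiece α β (Prod.map (S.Ψ p) (S.Ψ p) I) := by
  obtain ⟨w, hw, ⟨a, b, hab, rfl⟩ | ⟨i, hi, rfl⟩⟩ := hI
  all_goals
    have hpw : ∀ c ∈ p ++ w, c < n := by
      simp only [List.mem_append]
      rintro c (hc | hc)
      exacts [hp c hc, hw c hc]
    refine ⟨p ++ w, hpw, ?_⟩
    simp only [Ψ_append, Prod.map, Function.comp_apply]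
  exacts [Or.inl ⟨a, b, hab, rfl⟩, Or.inr ⟨i, hi, rfl⟩]

section

variable (hρ : ContractionVec n ρ)
include hρ

theorem f_strictMono {i : ℕ} (hi : i < n) : StrictMono (S.f i) :=
  fun _ _ hxy => add_lt_add_left (mul_lt_mul_of_pos_left hxy (hρ.pos i hi)) _

theorem f_one_le_f_zero {i j : ℕ} (hij : i < j) (hj : j < n) : S.f i 1 ≤ S.f j 0 := by
  induction j, hij using Nat.le_induction with
  | base => exact S.order i hj
  | succ j hij ih =>
    calc S.f i 1 ≤ S.f j 0 := ih (by omega)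
      _ ≤ S.f j 1 := (S.f_strictMono hρ (by omega)).monotone zero_le_one
      _ ≤ S.f (j + 1) 0 := S.order j hj

theorem f_le_f_of_lt {i j : ℕ} (hij : i < j) (hj : j < n) {x y : ℝ} (hx : x ≤ 1) (hy : 0 ≤ y) :
    S.f i x ≤ S.f j y :=
  calc S.f i x ≤ S.f i 1 := (S.f_strictMono hρ (hij.trans hj)).monotone hx
    _ ≤ S.f j 0 := S.f_one_le_f_zero hρ hij hj
    _ ≤ S.f j y := (S.f_strictMono hρ hj).monotone hy

theorem f_zero_le_f {i j : ℕ} (hij : i ≤ j) (hj : j < n) {y : ℝ} (hy : 0 ≤ y) :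
    S.f i 0 ≤ S.f j y := by
  rcases hij.lt_or_eq with hij | rfl
  · exact S.f_le_f_of_lt hρ hij hj zero_le_one hy
  · exact (S.f_strictMono hρ hj).monotone hy

theorem f_le_f_one {i j : ℕ} (hij : i ≤ j) (hj : j < n) {x : ℝ} (hx : x ≤ 1) :
    S.f i x ≤ S.f j 1 := by
  rcases hij.lt_or_eq with hij | rfl
  · exact S.f_le_f_of_lt hρ hij hj hx zero_le_one
  · exact (S.f_strictMono hρ hj).monotone hx

theorem f_mem_Icc {i : ℕ} (hi : i < n) {x : ℝ} (hx : x ∈ Icc (0 : ℝ) 1) :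
    S.f i x ∈ Icc (0 : ℝ) 1 :=
  ⟨S.left0 ▸ S.f_zero_le_f hρ (Nat.zero_le i) hi hx.1,
    S.right1 ▸ S.f_le_f_one hρ (show i ≤ n - 1 by omega) (by omega) hx.2⟩

theorem Ψ_mem_Icc {w : List ℕ} (hw : ∀ c ∈ w, c < n) {x : ℝ} (hx : x ∈ Icc (0 : ℝ) 1) :
    S.Ψ w x ∈ Icc (0 : ℝ) 1 := by
  induction w with
  | nil => exact hx
  | cons i w ih =>
    exact S.f_mem_Icc hρ (hw i List.mem_cons_self) (ih fun c hc => hw c (List.mem_cons_of_mem i hc))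

theorem Ψ_strictMono {w : List ℕ} (hw : ∀ c ∈ w, c < n) : StrictMono (S.Ψ w) := by
  induction w with
  | nil => exact strictMono_id
  | cons i w ih =>
    exact (S.f_strictMono hρ (hw i List.mem_cons_self)).comp
      (ih fun c hc => hw c (List.mem_cons_of_mem i hc))

theorem T_subset_Icc : S.T ⊆ Icc (0 : ℝ) 1 := by
  have hbdd := S.compactT.bddAbove
  have hbdd' := S.compactT.bddBelow
  -- `sup T = Ψ_i(s)` with `s ≤ sup T` and `Ψ_i(1) ≤ 1` forces `sup T ≤ 1`; dually for `inf T`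
  obtain ⟨i, hi, s, hs, hsM⟩ := S.exists_f_eq (S.compactT.sSup_mem S.nonemptyT)
  obtain ⟨j, hj, s', hs', hsm⟩ := S.exists_f_eq (S.compactT.sInf_mem S.nonemptyT)
  have hM : sSup S.T ≤ 1 := by
    have h1 := (S.f_mem_Icc hρ hi ⟨zero_le_one, le_rfl⟩).2
    have h2 := le_csSup hbdd hs
    simp only [f, affMap] at hsM h1
    nlinarith [mul_le_mul_of_nonneg_left h2 (hρ.pos i hi).le, hρ.lt_one i hi]
  have hm : 0 ≤ sInf S.T := by
    have h0 := (S.f_mem_Icc hρ hj ⟨le_rfl, zero_le_one⟩).1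
    have h2 := csInf_le hbdd' hs'
    simp only [f, affMap] at hsm h0
    nlinarith [mul_le_mul_of_nonneg_left h2 (hρ.pos j hj).le, hρ.lt_one j hj]
  exact fun x hx => ⟨hm.trans (csInf_le hbdd' hx), (le_csSup hbdd hx).trans hM⟩

theorem mem_T_of_isFixedPt {i : ℕ} (hi : i < n) {p : ℝ} (hp : Function.IsFixedPt (S.f i) p) :
    p ∈ S.T := by
  obtain ⟨x, hx⟩ := S.nonemptyT
  have hiter : ∀ k : ℕ, p + ρ i ^ k * (x - p) ∈ S.T := by
    intro k
    induction k with
    | zero => simpa using hx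
    | succ k ih =>
      convert S.f_mem_T hi ih using 1
      simp only [Function.IsFixedPt, f, affMap] at hp ⊢
      linear_combination (-1 : ℝ) * hp
  have hlim : Filter.Tendsto (fun k : ℕ => p + ρ i ^ k * (x - p)) Filter.atTop (nhds p) := by
    simpa using ((tendsto_pow_atTop_nhds_zero_of_lt_one (hρ.pos i hi).le
      (hρ.lt_one i hi)).mul_const (x - p)).const_add p
  exact S.compactT.isClosed.mem_of_tendsto hlim (Filter.Eventually.of_forall hiter)

theorem zero_mem_T : (0 : ℝ) ∈ S.T :=
  S.mem_T_of_isFixedPt hρ (by linarith [hρ.three_le]) S.left0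

theorem one_mem_T : (1 : ℝ) ∈ S.T :=
  S.mem_T_of_isFixedPt hρ (by have := hρ.three_le; omega) S.right1

theorem biUnion_cyl_eq {a b : ℕ} (hab : a ≤ b) (hb : b < n) :
    ⋃ j ∈ Finset.Icc a b, S.cyl [j] = S.T ∩ Icc (S.f a 0) (S.f b 1) := by
  have hT := S.T_subset_Icc hρ
  simp only [cyl_singleton]
  apply Subset.antisymm
  · simp only [iUnion_subset_iff, Finset.mem_Icc]
    rintro j ⟨haj, hjb⟩ _ ⟨s, hs, rfl⟩
    have hj := hjb.trans_lt hb
    exact ⟨S.f_mem_T hj hs, S.f_zero_le_f hρ haj hj (hT hs).1, S.f_le_f_one hρ hjb hb (hT hs).2⟩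
  · rintro z ⟨hz, hza, hzb⟩
    simp only [mem_iUnion, Finset.mem_Icc]
    obtain ⟨e, he, s, hs, rfl⟩ := S.exists_f_eq hz
    -- a point of `T_e` with `e` outside `[a, b]` can only be the common endpoint
    by_cases hae : e < a
    · have := S.f_le_f_of_lt hρ hae (hab.trans_lt hb) (hT hs).2 le_rfl
      exact ⟨a, ⟨le_rfl, hab⟩, 0, S.zero_mem_T hρ, by linarith⟩
    by_cases hbe : b < e
    · have := S.f_le_f_of_lt hρ hbe he le_rfl (hT hs).1
      exact ⟨b, ⟨hab, le_rfl⟩, 1, S.one_mem_T hρ, by linarith⟩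
    exact ⟨e, ⟨not_lt.mp hae, not_lt.mp hbe⟩, s, hs, rfl⟩

theorem image_f_inter_Icc {i : ℕ} (hi : i < n) {x y : ℝ} (hx : 0 ≤ x) (hy : y ≤ 1) :
    S.f i '' (S.T ∩ Icc x y) = S.T ∩ Icc (S.f i x) (S.f i y) := by
  have hcyl := S.biUnion_cyl_eq hρ le_rfl hi
  rw [Finset.Icc_self, Finset.set_biUnion_singleton, cyl_singleton] at hcyl
  have hmono := (S.f_strictMono hρ hi).monotone
  have himage : S.f i '' Icc x y = Icc (S.f i x) (S.f i y) :=
    image_affine_Icc' (hρ.pos i hi) _ _ _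
  rw [image_inter (S.f_strictMono hρ hi).injective, hcyl, himage, inter_assoc,
    inter_eq_right.mpr (Icc_subset_Icc (hmono hx) (hmono hy))]

theorem image_Ψ_inter_Icc {w : List ℕ} (hw : ∀ c ∈ w, c < n) {x y : ℝ}
    (hx : x ∈ Icc (0 : ℝ) 1) (hy : y ∈ Icc (0 : ℝ) 1) :
    S.Ψ w '' (S.T ∩ Icc x y) = S.T ∩ Icc (S.Ψ w x) (S.Ψ w y) := by
  induction w with
  | nil => exact image_id _
  | cons i w ih =>
    have hw' : ∀ c ∈ w, c < n := fun c hc => hw c (List.mem_cons_of_mem i hc)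
    rw [show S.Ψ (i :: w) = S.f i ∘ S.Ψ w from rfl, image_comp, ih hw']
    exact S.image_f_inter_Icc hρ (hw i List.mem_cons_self) (S.Ψ_mem_Icc hρ hw' hx).1
      (S.Ψ_mem_Icc hρ hw' hy).2

theorem inter_Ioo_Ψ_eq_empty {w : List ℕ} (hw : ∀ c ∈ w, c < n) {x y : ℝ}
    (hx : x ∈ Icc (0 : ℝ) 1) (hy : y ∈ Icc (0 : ℝ) 1) (h : S.T ∩ Ioo x y = ∅) :
    S.T ∩ Ioo (S.Ψ w x) (S.Ψ w y) = ∅ := by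
  refine eq_empty_of_forall_notMem fun z ⟨hz, hxz, hzy⟩ => ?_
  have hz' : z ∈ S.Ψ w '' (S.T ∩ Icc x y) := by
    rw [S.image_Ψ_inter_Icc hρ hw hx hy]
    exact ⟨hz, hxz.le, hzy.le⟩
  obtain ⟨s, ⟨hs, -⟩, rfl⟩ := hz'
  have hmono := S.Ψ_strictMono hρ hw
  exact h.subset ⟨hs, hmono.lt_iff_lt.mp hxz, hmono.lt_iff_lt.mp hzy⟩

theorem inter_Ioo_f_one_f_zero {i j : ℕ} (hij : i + 1 = j) (hj : j < n) :
    S.T ∩ Ioo (S.f i 1) (S.f j 0) = ∅ := by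
  refine eq_empty_of_forall_notMem fun z ⟨hz, h1, h2⟩ => ?_
  obtain ⟨e, he, s, hs, rfl⟩ := S.exists_f_eq hz
  have hs01 := S.T_subset_Icc hρ hs
  rcases le_or_gt e i with hei | hie
  · linarith [S.f_le_f_one hρ hei (by omega) hs01.2]
  · linarith [S.f_zero_le_f hρ (show j ≤ e by omega) he hs01.1]

theorem _root_.GapChain.map_Ψ {w : List ℕ} (hw : ∀ c ∈ w, c < n) {A B : ℝ}
    {l : List (ℝ × ℝ)} (hA : 0 ≤ A) (h : GapChain S.T A l B) :
    GapChain S.T (S.Ψ w A) (l.map (Prod.map (S.Ψ w) (S.Ψ w))) (S.Ψ w B) := by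
  have hmono := S.Ψ_strictMono hρ hw
  induction h with
  | nil => exact .nil _
  | cons hAI hI hIT hgap _ ih =>
    have hI01 := S.T_subset_Icc hρ hIT
    exact .cons (hmono hAI) (hmono.monotone hI) (S.Ψ_mem_T hw hIT)
      (S.inter_Ioo_Ψ_eq_empty hρ hw ⟨hA, hAI.le.trans hI01.2⟩ hI01 hgap) (ih (hI01.1.trans hI))

theorem image_biUnion_cyl {w : List ℕ} (hw : ∀ c ∈ w, c < n) {a b : ℕ} (hab : a ≤ b)
    (hb : b < n) :
    S.Ψ w '' ⋃ j ∈ Finset.Icc a b, S.cyl [j] = S.T ∩ Icc (S.Ψ w (S.f a 0)) (S.Ψ w (S.f b 1)) := by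
  rw [S.biUnion_cyl_eq hρ hab hb, S.image_Ψ_inter_Icc hρ hw
    (S.f_mem_Icc hρ (hab.trans_lt hb) ⟨le_rfl, zero_le_one⟩)
    (S.f_mem_Icc hρ hb ⟨zero_le_one, le_rfl⟩)]

theorem patchL_eq {α : ℕ} (hα1 : 1 ≤ α) (hαn : α ≤ n) {w : List ℕ} (hw : ∀ c ∈ w, c < n)
    (k : ℕ) :
    S.patchL α w k = S.T ∩ Icc (S.Ψ w 0) (S.Ψ (w ++ List.replicate k 0) (S.f (α - 1) 1)) := by
  have hrange : Finset.range α = Finset.Icc 0 (α - 1) := by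
    ext; simp only [Finset.mem_range, Finset.mem_Icc]; omega
  have hwk := forall_lt_append_replicate_zero hw (by omega) k
  rw [patchL, hrange, biUnion_cyl_append, S.image_biUnion_cyl hρ hwk (Nat.zero_le _) (by omega),
    f_zero_zero, Ψ_append, Function.comp_apply, Ψ_replicate_zero]

theorem patchR_zero_eq {β : ℕ} (hβ1 : 1 ≤ β) (hβn : β ≤ n) {w : List ℕ}
    (hw : ∀ c ∈ w, c < n) :
    S.patchR β w 0 = S.T ∩ Icc (S.Ψ w (S.f (n - β) 0)) (S.Ψ w 1) := by
  have hIco : Finset.Ico (n - β) n = Finset.Icc (n - β) (n - 1) := by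
    ext; simp only [Finset.mem_Ico, Finset.mem_Icc]; omega
  rw [patchR, List.replicate_zero, List.append_nil, hIco, biUnion_cyl_append,
    S.image_biUnion_cyl hρ hw (by omega) (by omega), f_last_one]

theorem patchR_union_patchL {α β : ℕ} (hα1 : 1 ≤ α) (hαn : α ≤ n) (hβ1 : 1 ≤ β) (hβn : β ≤ n)
    {i : ℕ} (hi : S.touch i) :
    S.patchR β [i] 0 ∪ S.patchL α [i + 1] 0 =
      S.T ∩ Icc (S.f i (S.f (n - β) 0)) (S.f (i + 1) (S.f (α - 1) 1)) := by
  have hi' : i < n := by have := hi.1; omega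
  have hv : ∀ c ∈ [i], c < n := by simpa using hi'
  have hv' : ∀ c ∈ [i + 1], c < n := by simpa using hi.1
  rw [S.patchR_zero_eq hρ hβ1 hβn hv, S.patchL_eq hρ hα1 hαn hv', ← inter_union_distrib_left]
  change S.T ∩ (Icc (S.f i (S.f (n - β) 0)) (S.f i 1) ∪
    Icc (S.f (i + 1) 0) (S.f (i + 1) (S.f (α - 1) 1))) = _
  rw [hi.f_one_eq]
  refine congrArg _ (Icc_union_Icc_eq_Icc ?_ ((S.f_strictMono hρ hi.1).monotone
    (S.f_mem_Icc hρ (by omega) ⟨zero_le_one, le_rfl⟩).1))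
  rw [← hi.f_one_eq]
  exact (S.f_strictMono hρ hi').monotone (S.f_mem_Icc hρ (by omega) ⟨le_rfl, zero_le_one⟩).2

variable {S} in
theorem IsPiece.t1mem_or_t2mem {α β : ℕ} (hα : S.alphaRun α)
    (hβ : S.betaRun β) {I : ℝ × ℝ} (hI : S.IsPiece α β I)
    (hsep : 0 < setDist (S.T ∩ Icc I.1 I.2) (S.T \ (S.T ∩ Icc I.1 I.2))) :
    S.T1mem (S.T ∩ Icc I.1 I.2) ∨ S.T2mem α β (S.T ∩ Icc I.1 I.2) := by
  obtain ⟨w, hw, ⟨a, b, hab, rfl⟩ | ⟨i, hi, rfl⟩⟩ := hI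
  · exact Or.inl ⟨w, a, b, hw, hab, (S.image_biUnion_cyl hρ hw hab.1 hab.2.1).symm, hsep⟩
  · refine Or.inr ⟨w, i, hw, hi, ?_⟩
    obtain ⟨hα1, hαn, -⟩ := hα
    obtain ⟨hβ1, hβn, -⟩ := hβ
    have hi' : i < n := by have := hi.1; omega
    rw [S.patchR_union_patchL hρ hα1 hαn.le hβ1 hβn.le hi,
      S.image_Ψ_inter_Icc hρ hw
        (S.f_mem_Icc hρ hi' (S.f_mem_Icc hρ (by omega) ⟨le_rfl, zero_le_one⟩))
        (S.f_mem_Icc hρ hi.1 (S.f_mem_Icc hρ (by omega) ⟨zero_le_one, le_rfl⟩))]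

theorem exists_runs_gapChain {a m : ℕ} (ham : a ≤ m) (hm : m < n) (ha : ¬ S.touch a)
    (hm' : m = n - 1 ∨ ¬ S.touch m) :
    ∃ L : List (ℕ × ℕ), (∀ r ∈ L, S.run r.1 r.2) ∧
      GapChain S.T (S.f a 1) (L.map fun r => (S.f r.1 0, S.f r.2 1)) (S.f m 1) ∧
      ((∃ j, a < j ∧ j < m ∧ ¬ S.touch j) → 2 ≤ L.length) := by
  induction h : m - a using Nat.strong_induction_on generalizing a with
  | _ k ih =>
  rcases ham.eq_or_lt with rfl | ham
  · exact ⟨[], by simp, .nil _, fun ⟨j, h1, h2, _⟩ => by omega⟩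
  classical
  obtain ⟨b, ⟨hab, hb⟩, hmin⟩ : ∃ b, (a < b ∧ (b = m ∨ ¬ S.touch b)) ∧
      ∀ j, a < j → j < b → j ≠ m ∧ S.touch j := by
    have hex : ∃ b, a < b ∧ (b = m ∨ ¬ S.touch b) := ⟨m, ham, Or.inl rfl⟩
    refine ⟨Nat.find hex, Nat.find_spec hex, fun j h1 h2 => ?_⟩
    have := Nat.find_min hex h2
    push Not at this
    exact this h1
  have hbm : b ≤ m := not_lt.mp fun h' => (hmin m ham h').1 rfl
  have hrun : S.run (a + 1) b := ⟨hab, by omega, fun j h1 h2 => (hmin j h1 h2).2,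
    Or.inr (by simpa using ha), hb.elim (fun h => by rw [h]; exact hm') Or.inr⟩
  have hhead : ∀ {l B}, GapChain S.T (S.f b 1) l B →
      GapChain S.T (S.f a 1) ((S.f (a + 1) 0, S.f b 1) :: l) B := fun htail =>
    .cons (S.f_one_lt_f_zero rfl (by omega) ha) (S.f_zero_le_f hρ hab (by omega) zero_le_one)
      (S.f_mem_T (by omega) (S.zero_mem_T hρ)) (S.inter_Ioo_f_one_f_zero hρ rfl (by omega)) htail
  rcases hbm.eq_or_lt with rfl | hbm
  · exact ⟨[(a + 1, b)], by simpa using hrun, hhead (.nil _),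
      fun ⟨j, h1, h2, h3⟩ => absurd (hmin j h1 h2).2 h3⟩
  have hb' : ¬ S.touch b := hb.resolve_left hbm.ne
  obtain ⟨L, hL, hchain, -⟩ := ih (m - b) (by omega) hbm.le hb' rfl
  refine ⟨(a + 1, b) :: L, ?_, hhead hchain, fun _ => ?_⟩
  · simpa [hrun] using hL
  · have hlt : S.f b 1 < S.f m 1 := (S.f_one_lt_f_zero rfl (by omega) hb').trans_le
      (S.f_zero_le_f hρ hbm (by omega) zero_le_one)
    have := List.length_pos_iff.mpr (List.map_eq_nil_iff.not.mp (hchain.ne_nil hlt))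
    simp only [List.length_cons]
    omega

theorem exists_blocks_gapChain {α β : ℕ} (hα : S.alphaRun α) (hβ : S.betaRun β) {a b : ℕ}
    (hab : a ≤ b) (hb : b < n) (htouch : ∀ j, a ≤ j → j < b → S.touch j) :
    ∃ L : List (ℝ × ℝ), GapChain S.T (S.f a (S.f (α - 1) 1)) L (S.f b (S.f (α - 1) 1)) ∧
      (∀ I ∈ L, S.IsPiece α β I) ∧ (a < b → L ≠ []) := by
  have hαβ := hα.le_sub hβ
  obtain ⟨hα1, hαn, -, hαnt⟩ := hα
  obtain ⟨hβ1, hβn, -, hβnt⟩ := hβ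
  have hB₀ := S.f_mem_Icc hρ (show α - 1 < n by omega) ⟨zero_le_one, le_rfl⟩
  have hnβ := S.f_mem_Icc hρ (show n - β < n by omega) ⟨le_rfl, zero_le_one⟩
  -- the first-level components between the initial and the final run of letters
  obtain ⟨Lmid, hmid, hmidC, -⟩ := S.exists_runs_gapChain hρ (a := α - 1) (m := n - β - 1)
    (by omega) (by omega) hαnt (Or.inr hβnt)
  induction b, hab using Nat.le_induction with
  | base => exact ⟨[], .nil _, by simp, fun h => absurd h (lt_irrefl a)⟩
  | succ b hab ih =>
    obtain ⟨L, hL, hP, -⟩ := ih (by omega) fun j h1 h2 => htouch j h1 (by omega)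
    have hbv : ∀ c ∈ [b], c < n := by simpa using (show b < n by omega)
    refine ⟨L ++ ((Lmid.map fun r => (S.f r.1 0, S.f r.2 1)).map (Prod.map (S.Ψ [b]) (S.Ψ [b])) ++
        [(S.f b (S.f (n - β) 0), S.f (b + 1) (S.f (α - 1) 1))]),
      hL.append ((hmidC.map_Ψ S hρ hbv hB₀.1).append (.cons ?_ ?_ ?_ ?_ (.nil _))),
      fun I hI => ?_, by simp⟩
    · exact S.f_strictMono hρ (by omega) (S.f_one_lt_f_zero (by omega) (by omega) hβnt)
    · exact S.f_le_f_of_lt hρ (Nat.lt_succ_self _) hb hnβ.2 hB₀.1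
    · exact S.f_mem_T (by omega) (S.f_mem_T (by omega) (S.zero_mem_T hρ))
    · exact S.inter_Ioo_Ψ_eq_empty hρ hbv (S.f_mem_Icc hρ (by omega) ⟨zero_le_one, le_rfl⟩) hnβ
        (S.inter_Ioo_f_one_f_zero hρ (by omega) (by omega))
    simp only [List.mem_append, List.map_map, List.mem_map, List.mem_singleton] at hI
    obtain hI | ⟨r, hr, rfl⟩ | rfl := hI
    · exact hP I hI
    · exact ⟨[b], hbv, Or.inl ⟨r.1, r.2, hmid r hr, rfl⟩⟩
    · exact ⟨[], by simp, Or.inr ⟨b, htouch b hab (Nat.lt_succ_self b), rfl⟩⟩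

theorem exists_span_gapChain {α β : ℕ} (hα : S.alphaRun α) (hβ : S.betaRun β) {a b : ℕ}
    (hab : a ≤ b) (hb : b < n) (htouch : ∀ j, a ≤ j → j < b → S.touch j) :
    ∃ L : List (ℝ × ℝ), GapChain S.T (S.f a (S.f (α - 1) 1)) L (S.f b 1) ∧
      (∀ I ∈ L, S.IsPiece α β I) ∧
      (a < b ∨ (∃ j, α ≤ j ∧ j < n - 1 ∧ ¬ S.touch j) → 2 ≤ L.length) := by
  obtain ⟨hα1, hαn, -, hαnt⟩ := id hα
  obtain ⟨L, hL, hP, hne⟩ := S.exists_blocks_gapChain hρ hα hβ hab hb htouch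
  -- the first-level components after the initial run of letters, inside `T_b`
  obtain ⟨Lend, hend, hendC, hendN⟩ := S.exists_runs_gapChain hρ (a := α - 1) (m := n - 1)
    (by omega) (by omega) hαnt (Or.inl rfl)
  have hbv : ∀ c ∈ [b], c < n := by simpa using hb
  have hendC' := hendC.map_Ψ S hρ hbv (S.f_mem_Icc hρ (show α - 1 < n by omega)
    ⟨zero_le_one, le_rfl⟩).1
  change GapChain S.T (S.f b (S.f (α - 1) 1)) _ (S.f b (S.f (n - 1) 1)) at hendC'
  rw [f_last_one] at hendC'
  refine ⟨_, hL.append hendC', fun I hI => ?_, ?_⟩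
  · simp only [List.mem_append, List.map_map, List.mem_map] at hI
    obtain hI | ⟨r, hr, rfl⟩ := hI
    · exact hP I hI
    · exact ⟨[b], hbv, Or.inl ⟨r.1, r.2, hend r hr, rfl⟩⟩
  simp only [List.length_append, List.length_map]
  rintro (hab' | ⟨j, h1, h2, h3⟩)
  · have hlt : S.f (α - 1) 1 < S.f (n - 1) 1 := (S.f_one_lt_f_zero rfl (by omega) hαnt).trans_le
      (S.f_zero_le_f hρ (by omega) (by omega) zero_le_one)
    have := List.length_pos_iff.mpr (hne hab')
    have := List.length_pos_iff.mpr (hendC.ne_nil hlt)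
    simp only [List.length_map] at this
    omega
  · have := hendN ⟨j, by omega, h2, h3⟩
    omega

-- Here `T₁ ∪ ⋯ ∪ T_{n-1}` is a single first-level component, so the base set
-- `Ψ₀(T₁ ∪ ⋯ ∪ T_{n-1})` has to be split one level deeper.
theorem exists_base_gapChain_of_forall_touch {β : ℕ} (hα : S.alphaRun 1) (hβ : S.betaRun β)
    (htouch : ∀ i, 1 ≤ i → i + 1 < n → S.touch i) :
    ∃ L : List (ℝ × ℝ), GapChain S.T (S.f 0 (S.f 0 1)) L (S.f 0 1) ∧
      2 ≤ L.length ∧ ∀ I ∈ L, S.IsPiece 1 β I := by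
  have hn := hρ.three_le
  have h0 : ¬ S.touch 0 := hα.2.2.2
  obtain ⟨L, hL, hP, hlen⟩ := S.exists_span_gapChain hρ hα hβ (a := 1) (b := n - 1)
    (by omega) (by omega) fun j h1 h2 => htouch j h1 (by omega)
  change GapChain S.T (S.f 1 (S.f 0 1)) L (S.f (n - 1) 1) at hL
  rw [f_last_one] at hL
  have hchain : GapChain S.T (S.f 0 1) ((S.f 1 (S.f 0 0), S.f 1 (S.f 0 1)) :: L) 1 := by
    refine .cons ?_ ((S.f_strictMono hρ (by omega)).monotone
      ((S.f_strictMono hρ (by omega)).monotone zero_le_one)) ?_ ?_ hL <;> rw [f_zero_zero]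
    · exact S.f_one_lt_f_zero rfl (by omega) h0
    · exact S.f_mem_T (by omega) (S.zero_mem_T hρ)
    · exact S.inter_Ioo_f_one_f_zero hρ rfl (by omega)
  have hP' : ∀ I ∈ (S.f 1 (S.f 0 0), S.f 1 (S.f 0 1)) :: L, S.IsPiece 1 β I := by
    intro I hI
    rcases List.mem_cons.mp hI with rfl | hI
    · exact ⟨[1], by simp; omega, Or.inl ⟨0, 0, ⟨le_rfl, by omega, by simp, by simp, Or.inr h0⟩,
        rfl⟩⟩
    · exact hP I hI
  have h0' : ∀ c ∈ [0], c < n := by simp; omega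
  refine ⟨_, hchain.map_Ψ S hρ h0' (S.f_mem_Icc hρ (by omega) ⟨zero_le_one, le_rfl⟩).1,
    by simp; omega, fun I hI => ?_⟩
  obtain ⟨J, hJ, rfl⟩ := List.mem_map.mp hI
  exact (hP' J hJ).map h0'

theorem exists_base_gapChain {α β : ℕ} (hα : S.alphaRun α) (hβ : S.betaRun β) :
    ∃ L : List (ℝ × ℝ), GapChain S.T (S.f 0 (S.f (α - 1) 1)) L (S.f (α - 1) 1) ∧
      2 ≤ L.length ∧ ∀ I ∈ L, S.IsPiece α β I := by
  by_cases hdeg : α = 1 ∧ ∀ i, 1 ≤ i → i + 1 < n → S.touch i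
  · obtain ⟨rfl, hdeg⟩ := hdeg
    exact S.exists_base_gapChain_of_forall_touch hρ hα hβ hdeg
  obtain ⟨L, hL, hP, hlen⟩ := S.exists_span_gapChain hρ hα hβ (a := 0) (b := α - 1)
    (Nat.zero_le _) (by have := hα.2.1; omega) fun j _ h => hα.2.2.1 j (by omega)
  refine ⟨L, hL, hlen ?_, hP⟩
  by_cases hα1 : α = 1
  · push Not at hdeg
    obtain ⟨i, hi1, hin, hi⟩ := hdeg hα1
    exact Or.inr ⟨i, by omega, by omega, hi⟩
  · exact Or.inl (by have := hα.1; omega)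

theorem exists_gapChain_replicate {α β : ℕ} {B : ℝ} (hB : B ∈ Icc (0 : ℝ) 1)
    {L : List (ℝ × ℝ)} (hL : GapChain S.T (S.f 0 B) L B) (hP : ∀ I ∈ L, S.IsPiece α β I)
    (k : ℕ) :
    ∃ L' : List (ℝ × ℝ), GapChain S.T (S.Ψ (List.replicate k 0) B) L' B ∧
      L'.length = k * L.length ∧ ∀ I ∈ L', S.IsPiece α β I := by
  induction k with
  | zero => exact ⟨[], .nil _, by simp, by simp⟩
  | succ k ih =>
    obtain ⟨L', hL', hlen, hP'⟩ := ih
    have hn : 0 < n := by linarith [hρ.three_le]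
    have h0 : ∀ c ∈ [0], c < n := by simpa using hn
    refine ⟨L'.map (Prod.map (S.Ψ [0]) (S.Ψ [0])) ++ L, (hL'.map_Ψ S hρ h0 (S.Ψ_mem_Icc hρ
      (forall_lt_append_replicate_zero (w := []) (by simp) hn k) hB).1).append hL, ?_,
      fun I hI => ?_⟩
    · simp only [List.length_append, List.length_map, hlen]
      ring
    · rcases List.mem_append.mp hI with hI | hI
      · obtain ⟨J, hJ, rfl⟩ := List.mem_map.mp hI
        exact (hP' J hJ).map h0
      · exact hP I hI

theorem exists_tstar_decomposition {α β : ℕ} (hα : S.alphaRun α) (hβ : S.betaRun β)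
    {A B B' : ℝ} {G : List (ℝ × ℝ)} (hG : GapChain S.T A G B) (hA : A ∈ S.T) (hB : B < B')
    (hgap : S.T ∩ Ioo B B' = ∅) (hlen : 2 ≤ G.length) (hP : ∀ I ∈ G, S.IsPiece α β I) :
    ∃ (m : ℕ) (F : Fin m → Set ℝ), 2 ≤ m ∧
      (∀ r, S.T1mem (F r) ∨ S.T2mem α β (F r)) ∧
      (∀ r s, r ≠ s → F r ∩ F s = ∅) ∧
      (⋃ r, F r) = S.T ∩ Ioc A B := by
  refine ⟨G.length, fun r => S.T ∩ Icc (G.get r).1 (G.get r).2, hlen, fun r => ?_,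
    fun r s hrs => ?_, ?_⟩
  · exact (hP _ (G.get_mem r)).t1mem_or_t2mem hρ hα hβ
      (hG.setDist_pos hA hB hgap _ (G.get_mem r))
  · wlog h : r < s generalizing r s
    · rw [inter_comm]
      exact this s r hrs.symm (lt_of_le_of_ne (not_lt.mp h) hrs.symm)
    have hrs' := List.pairwise_iff_get.mp hG.pairwise_lt r s h
    refine eq_empty_of_forall_notMem fun z ⟨⟨_, hz⟩, ⟨_, hz'⟩⟩ => ?_
    linarith [hz.2, hz'.1]
  · rw [hG.inter_Ioc_eq]
    ext z
    simp only [mem_iUnion, exists_prop, List.mem_iff_get]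
    constructor
    · rintro ⟨r, hr⟩
      exact ⟨_, ⟨r, rfl⟩, hr⟩
    · rintro ⟨_, ⟨r, rfl⟩, hr⟩
      exact ⟨r, hr⟩

theorem patchL_sdiff_patchL {α : ℕ} (hα1 : 1 ≤ α) (hαn : α ≤ n) {w : List ℕ}
    (hw : ∀ c ∈ w, c < n) {u v : ℕ} :
    S.patchL α w u \ S.patchL α w v = S.T ∩ Ioc (S.Ψ (w ++ List.replicate v 0) (S.f (α - 1) 1))
      (S.Ψ (w ++ List.replicate u 0) (S.f (α - 1) 1)) := by
  have hwv := forall_lt_append_replicate_zero hw (by omega) v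
  have h0 : S.Ψ w 0 ≤ S.Ψ (w ++ List.replicate v 0) (S.f (α - 1) 1) := by
    conv_lhs => rw [← S.Ψ_replicate_zero v, ← Function.comp_apply (f := S.Ψ w), ← Ψ_append]
    exact (S.Ψ_strictMono hρ hwv).monotone (S.f_mem_Icc hρ (by omega) ⟨zero_le_one, le_rfl⟩).1
  rw [S.patchL_eq hρ hα1 hαn hw, S.patchL_eq hρ hα1 hαn hw]
  ext z
  simp only [mem_sdiff, mem_inter_iff, mem_Icc, mem_Ioc]
  constructor
  · rintro ⟨⟨hz, h1, h2⟩, h3⟩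
    exact ⟨hz, lt_of_not_ge fun h => h3 ⟨hz, h1, h⟩, h2⟩
  · rintro ⟨hz, h1, h2⟩
    exact ⟨⟨hz, h0.trans h1.le, h2⟩, fun h => absurd h.2.2 (not_le.mpr h1)⟩

theorem exists_gapChain_patchL_sdiff {α β : ℕ} (hα : S.alphaRun α) (hβ : S.betaRun β)
    {w : List ℕ} (hw : ∀ c ∈ w, c < n) {u v : ℕ} (huv : u < v) :
    ∃ G : List (ℝ × ℝ), GapChain S.T (S.Ψ (w ++ List.replicate v 0) (S.f (α - 1) 1)) G
        (S.Ψ (w ++ List.replicate u 0) (S.f (α - 1) 1)) ∧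
      2 ≤ G.length ∧ ∀ I ∈ G, S.IsPiece α β I := by
  have hn : 0 < n := by linarith [hρ.three_le]
  have hB₀ := S.f_mem_Icc hρ (show α - 1 < n by have := hα.2.1; omega)
    ⟨zero_le_one, le_rfl⟩
  have hp := forall_lt_append_replicate_zero hw hn u
  obtain ⟨L, hL, hlen, hP⟩ := S.exists_base_gapChain hρ hα hβ
  obtain ⟨G, hG, hGlen, hGP⟩ := S.exists_gapChain_replicate hρ hB₀ hL hP (v - u)
  have hstart : S.Ψ (w ++ List.replicate u 0) (S.Ψ (List.replicate (v - u) 0) (S.f (α - 1) 1)) =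
      S.Ψ (w ++ List.replicate v 0) (S.f (α - 1) 1) := by
    rw [← Function.comp_apply (f := S.Ψ _), ← Ψ_append, List.append_assoc, ← List.replicate_add,
      Nat.add_sub_cancel' huv.le]
  refine ⟨_, hstart ▸ hG.map_Ψ S hρ hp (S.Ψ_mem_Icc hρ
    (forall_lt_append_replicate_zero (w := []) (by simp) hn _) hB₀).1, ?_, fun I hI => ?_⟩
  · rw [List.length_map, hGlen]
    nlinarith [Nat.sub_pos_of_lt huv]
  · obtain ⟨J, hJ, rfl⟩ := List.mem_map.mp hI
    exact (hGP J hJ).map hp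

end

end TouchingIFS

/-- from Lemma 3.4: `L_u(T_i) ∖ L_v(T_i)` is a finite (≥ 2) disjoint
union of sets from the classes `𝒯⁽¹⁾` and `𝒯⁽²⁾`, i.e. it belongs to `𝒯*`. -/
theorem patchL_diff_mem_Tstar {n : ℕ} {ρ : ℕ → ℝ}
    (hρ : ContractionVec n ρ) (S : TouchingIFS n ρ)
    (α β : ℕ) (hα : S.alphaRun α) (hβ : S.betaRun β)
    (wi : List ℕ) (hwi : ∀ a ∈ wi, a < n)
    (u v : ℕ) (huv : u < v) :
    ∃ (m : ℕ) (F : Fin m → Set ℝ), 2 ≤ m ∧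
      (∀ r, S.T1mem (F r) ∨ S.T2mem α β (F r)) ∧
      (∀ r s, r ≠ s → F r ∩ F s = ∅) ∧
      (⋃ r, F r) = S.patchL α wi u \ S.patchL α wi v := by
  obtain ⟨hα1, hαn, -, hαnt⟩ := id hα
  have hp := forall_lt_append_replicate_zero hwi (by omega) u
  have hB₀ : S.f (α - 1) 1 ∈ Icc (0 : ℝ) 1 := S.f_mem_Icc hρ (by omega) ⟨zero_le_one, le_rfl⟩
  obtain ⟨G, hG, hlen, hP⟩ := S.exists_gapChain_patchL_sdiff hρ hα hβ hwi huv
  rw [S.patchL_sdiff_patchL hρ hα1 hαn.le hwi]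
  -- the gap closing the chain on the right is the image of the gap after `T_{α-1}`
  refine S.exists_tstar_decomposition hρ hα hβ hG ?_
    (S.Ψ_strictMono hρ hp (S.f_one_lt_f_zero (by omega) hαn hαnt))
    (S.inter_Ioo_Ψ_eq_empty hρ hp hB₀ (S.f_mem_Icc hρ hαn ⟨le_rfl, zero_le_one⟩)
      (S.inter_Ioo_f_one_f_zero hρ (by omega) hαn)) hlen hP
  exact S.Ψ_mem_T (forall_lt_append_replicate_zero hwi (by omega) v)
    (S.f_mem_T (by omega) (S.one_mem_T hρ))
end
end

section
/- Let i be a left substitutable touching letter with witnesses j_i, k_i, k_i' (so diam L_{k_i}(T_{i+1}) = diam L_{k_i'}(T_{i j_i})), and let p,q ∈ ℤ⁺ satisfy ρ₁^p = ρₙ^q and p,q > k_i' + |j_i|. Define T^{(4)}_i = R_q(T_i) ∪ L_{k_i}(T_{i+1}) and D^{(4)}_i = L_{k_i'}(D_{i j_i}) ∪ R_q(D_i). Then Ψ_{i[n]^{2q}} ∘ Ψ_i^{−1}(T^{(4)}_i) = R_{3q}(T_i) ∪ L_{2p+k_i}(T_{i+1}) and Φ_{i[n]^{2q}} ∘ Φ_i^{−1}(D^{(4)}_i)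 = L_{k_i'}(D_{i[n]^{2q} j_i}) ∪ R_{3q}(D_i). -/
noncomputable section

open Set Metric MeasureTheory

variable {n : ℕ} {ρ : ℕ → ℝ}

/-!
`Ψ_{iw} ∘ Ψ_i⁻¹` sends every cylinder `Ψ_{iv}(K)` to `Ψ_{iwv}(K)`, so it only inserts `w` after
the root letter `i` of each patch rooted at `i`. The patch `L_k(T_{i+1})` is not rooted at `i`;
there one uses that `Ψ_{i[n]^{2q}} ∘ Ψ_i⁻¹` is the homothety of ratio `ρₙ^{2q}` centred at the
touching point `Ψ_i(1) = Ψ_{i+1}(0)`, which is also `Ψ_{(i+1)1^{2p}} ∘ Ψ_{i+1}⁻¹` since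
`ρ₁^{2p} = ρₙ^{2q}`.
-/

/-- The map `Ψ_{iw} ∘ Ψ_i⁻¹`. -/
def affConj (r t : ℕ → ℝ) (i : ℕ) (w : List ℕ) (x : ℝ) : ℝ :=
  affWord r t (i :: w) ((x - t i) / r i)

section AffineWords

variable {r t : ℕ → ℝ}

lemma affWord_cons_apply (i : ℕ) (w : List ℕ) (x : ℝ) :
    affWord r t (i :: w) x = r i * affWord r t w x + t i := rfl

lemma affWord_append (w v : List ℕ) : affWord r t (w ++ v) = affWord r t w ∘ affWord r t v := by
  induction w with
  | nil => rfl
  | cons i w ih => rw [List.cons_append, affWord, ih]; rfl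

lemma affWord_replicate_apply {c : ℕ} {z : ℝ} (hz : affMap r t c z = z) (k : ℕ) (x : ℝ) :
    affWord r t (List.replicate k c) x = z + r c ^ k * (x - z) := by
  induction k with
  | zero => simp [affWord]
  | succ k ih =>
    rw [List.replicate_succ, affWord_cons_apply, ih]
    simp only [affMap] at hz
    linear_combination hz

lemma affConj_comp_cons {i : ℕ} (hri : r i ≠ 0) (w v : List ℕ) :
    affConj r t i w ∘ affWord r t (i :: v) = affWord r t (i :: (w ++ v)) := by
  funext x
  simp only [Function.comp_apply, affConj, affWord_cons_apply, affWord_append,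
    add_sub_cancel_right, mul_div_cancel_left₀ _ hri]

lemma affConj_replicate_apply {i N : ℕ} (hri : r i ≠ 0) (hN : affMap r t N 1 = 1) (q : ℕ)
    (y : ℝ) :
    affConj r t i (List.replicate q N) y = affMap r t i 1 + r N ^ q * (y - affMap r t i 1) := by
  rw [affConj, affWord_cons_apply, affWord_replicate_apply hN]
  simp only [affMap]
  field_simp
  ring

lemma affConj_comp_succ {i N p q : ℕ} (hri : r i ≠ 0) (h0 : affMap r t 0 0 = 0)
    (hN : affMap r t N 1 = 1) (htouch : affMap r t i 1 = affMap r t (i + 1) 0)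
    (hpq : r 0 ^ p = r N ^ q) (m : ℕ) (u : List ℕ) :
    affConj r t i (List.replicate q N) ∘ affWord r t ((i + 1) :: (List.replicate m 0 ++ u)) =
      affWord r t ((i + 1) :: (List.replicate (p + m) 0 ++ u)) := by
  funext x
  simp only [Function.comp_apply, affConj_replicate_apply hri hN, htouch, affWord_cons_apply,
    affWord_append, affWord_replicate_apply h0]
  simp only [affMap]
  rw [← hpq, pow_add]
  ring

lemma image_iUnion_affWord {f : ℝ → ℝ} {s : Finset ℕ} {W W' : ℕ → List ℕ}
    (h : ∀ j ∈ s, f ∘ affWord r t (W j) = affWord r t (W' j)) (K : Set ℝ) :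
    f '' ⋃ j ∈ s, affWord r t (W j) '' K = ⋃ j ∈ s, affWord r t (W' j) '' K := by
  rw [image_iUnion₂]
  exact iUnion₂_congr fun j hj => by rw [← image_comp, h j hj]

lemma affConj_image_iUnion_replicate {i : ℕ} (hri : r i ≠ 0) (s : Finset ℕ) (c l k : ℕ)
    (K : Set ℝ) :
    affConj r t i (List.replicate l c) '' ⋃ j ∈ s, affWord r t ([i] ++ List.replicate k c ++ [j]) '' K =
      ⋃ j ∈ s, affWord r t ([i] ++ List.replicate (l + k) c ++ [j]) '' K :=
  image_iUnion_affWord (fun j _ => by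
    simp only [List.cons_append, List.nil_append, affConj_comp_cons hri,
      List.replicate_add, List.append_assoc]) K

end AffineWords

section Patches

variable {n : ℕ} {ρ : ℕ → ℝ} {i : ℕ}

lemma TouchingIFS.affConj_image_patchR (S : TouchingIFS n ρ) (hri : ρ i ≠ 0) (β l k : ℕ) :
    affConj ρ S.t i (List.replicate l (n - 1)) '' S.patchR β [i] k = S.patchR β [i] (l + k) :=
  affConj_image_iUnion_replicate hri _ _ _ _ _

lemma TouchingIFS.affConj_image_patchL_succ (S : TouchingIFS n ρ) (hri : ρ i ≠ 0)
    (hi : S.touch i) {p q : ℕ} (hpq : ρ 0 ^ p = ρ (n - 1) ^ q) (α m : ℕ) :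
    affConj ρ S.t i (List.replicate q (n - 1)) '' S.patchL α [i + 1] m =
      S.patchL α [i + 1] (p + m) :=
  image_iUnion_affWord (fun j _ => by
    simp only [List.cons_append, List.nil_append,
      affConj_comp_succ hri S.left0 S.right1 hi.2 hpq]) S.T

lemma DustIFS.affConj_image_patchR (Q : DustIFS n ρ) (hri : ρ i ≠ 0) (β l k : ℕ) :
    affConj ρ Q.d i (List.replicate l (n - 1)) '' Q.patchR β [i] k = Q.patchR β [i] (l + k) :=
  affConj_image_iUnion_replicate hri _ _ _ _ _

lemma DustIFS.affConj_image_patchL (Q : DustIFS n ρ) (hri : ρ i ≠ 0) (α : ℕ) (w u : List ℕ)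
    (k : ℕ) :
    affConj ρ Q.d i w '' Q.patchL α (i :: u) k = Q.patchL α (i :: (w ++ u)) k :=
  image_iUnion_affWord (fun j _ => by
    simp only [List.cons_append, affConj_comp_cons hri, List.append_assoc]) Q.D

end Patches

theorem shift_of_T4_D4_general {n : ℕ} {ρ : ℕ → ℝ}
    (hρ : ContractionVec n ρ) (S : TouchingIFS n ρ) (Q : DustIFS n ρ)
    (α β : ℕ)
    (i : ℕ) (hi : S.touch i)
    (jw : List ℕ) (a : ℕ) (ki ki' : ℕ)
    (p q : ℕ)
    (hpq : ρ 0 ^ p = ρ (n - 1) ^ q) :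
    ((fun x => affWord ρ S.t (i :: List.replicate (2 * q) (n - 1)) ((x - S.t i) / ρ i)) ''
        (S.patchR β [i] q ∪ S.patchL α [i + 1] ki) =
      S.patchR β [i] (3 * q) ∪ S.patchL α [i + 1] (2 * p + ki)) ∧
    ((fun x => affWord ρ Q.d (i :: List.replicate (2 * q) (n - 1)) ((x - Q.d i) / ρ i)) ''
        (Q.patchL α (i :: (jw ++ [a])) ki' ∪ Q.patchR β [i] q) =
      Q.patchL α (i :: (List.replicate (2 * q) (n - 1) ++ (jw ++ [a]))) ki' ∪
        Q.patchR β [i] (3 * q)) := by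
  have hri : ρ i ≠ 0 := (hρ.pos i (by have := hi.1; omega)).ne'
  have hpq2 : ρ 0 ^ (2 * p) = ρ (n - 1) ^ (2 * q) := by rw [pow_mul', hpq, ← pow_mul']
  have h3q : 3 * q = 2 * q + q := by ring
  show affConj ρ S.t i _ '' _ = _ ∧ affConj ρ Q.d i _ '' _ = _
  rw [h3q, image_union, image_union, S.affConj_image_patchR hri,
    S.affConj_image_patchL_succ hri hi hpq2, Q.affConj_image_patchL hri, Q.affConj_image_patchR hri]
  exact ⟨rfl, rfl⟩

/-- Lemma 3.7: for a left substitutable touching letter `i` with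
witnesses `j_i, k_i, k_i'`, and `p, q` with `ρ₁^p = ρₙ^q`, `p, q > k_i' + |j_i|`,
the maps `Ψ_{i[n]^{2q}} ∘ Ψ_i⁻¹` and `Φ_{i[n]^{2q}} ∘ Φ_i⁻¹` carry
`T⁽⁴⁾ᵢ = R_q(T_i) ∪ L_{k_i}(T_{i+1})` and `D⁽⁴⁾ᵢ = L_{k_i'}(D_{i j_i}) ∪ R_q(D_i)`
onto `R_{3q}(T_i) ∪ L_{2p+k_i}(T_{i+1})` and
`L_{k_i'}(D_{i[n]^{2q} j_i}) ∪ R_{3q}(D_i)` respectively. -/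
theorem shift_of_T4_D4 {n : ℕ} {ρ : ℕ → ℝ}
    (hρ : ContractionVec n ρ) (S : TouchingIFS n ρ) (Q : DustIFS n ρ)
    (α β : ℕ) (hα : S.alphaRun α) (hβ : S.betaRun β)
    (i : ℕ) (hi : S.touch i)
    (jw : List ℕ) (a : ℕ) (ki ki' : ℕ)
    (hjin : ∀ b ∈ jw ++ [a], b < n)
    (hwit : ρ (i + 1) * ρ 0 ^ ki = ρ i * ρ 0 ^ ki' * ((jw ++ [a]).map ρ).prod)
    (ha0 : a ≠ 0) (hatouch : ∀ ℓ, S.touch ℓ → a ≠ ℓ + 1)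
    (p q : ℕ) (hp : 1 ≤ p) (hq : 1 ≤ q)
    (hpq : ρ 0 ^ p = ρ (n - 1) ^ q)
    (hpbig : ki' + (jw ++ [a]).length < p) (hqbig : ki' + (jw ++ [a]).length < q) :
    ((fun x => affWord ρ S.t (i :: List.replicate (2 * q) (n - 1)) ((x - S.t i) / ρ i)) ''
        (S.patchR β [i] q ∪ S.patchL α [i + 1] ki) =
      S.patchR β [i] (3 * q) ∪ S.patchL α [i + 1] (2 * p + ki)) ∧
    ((fun x => affWord ρ Q.d (i :: List.replicate (2 * q) (n - 1)) ((x - Q.d i) / ρ i)) ''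
        (Q.patchL α (i :: (jw ++ [a])) ki' ∪ Q.patchR β [i] q) =
      Q.patchL α (i :: (List.replicate (2 * q) (n - 1) ++ (jw ++ [a]))) ki' ∪
        Q.patchR β [i] (3 * q)) :=
  shift_of_T4_D4_general hρ S Q α β i hi jw a ki ki' p q hpq
end
end
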